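/- arXiv:2508.02607 — 2 statements merged into one kernel-verified Lean document; each statement's English description precedes it below -/
import Mathlib

section
/- Let α ∈ ℂ with |α| < 1. The product Π_p (1 − α^p p^{-s})^{-1} over all primes p converges absolutely for Re(s) > (3/log 3)·log|α|, and for such s it equals the absolutely convergent Dirichlet series Σ_{n≥1} α^{S(n)} n^{-s}. -/
/-!
The terms `α ^ S n * n ^ (-s)` form a completely multiplicative function, so the Euler product
identity holds once the series converges absolutely. Its partial sums up to `N` are bounded by the
finite products `∏_{p < N} (1 - |α| ^ p * p ^ (-σ))⁻¹`, and these stay bounded as soon as every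
factor is finite and `∑_p |α| ^ p * p ^ (-σ)` converges. The sum converges for every `s` by
geometric decay; finiteness of the factors means `|α| ^ p < p ^ σ`, which follows from
`p ^ 3 ≤ 3 ^ p` (sharp at `p = 3`, whence the constant `3 / log 3`).
-/

def S (n : ℕ) : ℕ := n.factorization.sum fun p k => k * p

open Finset Real

lemma cube_le_three_pow (n : ℕ) : n ^ 3 ≤ 3 ^ n := by
  obtain hn | hn := lt_or_ge n 3
  · interval_cases n <;> norm_num
  · induction n, hn using Nat.le_induction with
    | base => norm_num
    | succ n hn ih =>
      calc (n + 1) ^ 3 ≤ 3 * n ^ 3 := by nlinarith [pow_pos (by omega : 0 < n) 2]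
        _ ≤ 3 ^ (n + 1) := by rw [pow_succ' 3 n]; omega

lemma pow_lt_rpow_of_mul_log_lt {r σ : ℝ} (hr0 : 0 < r) (hr1 : r < 1)
    (hσ : 3 / log 3 * log r < σ) {n : ℕ} (hn : 2 ≤ n) : r ^ n < (n : ℝ) ^ σ := by
  have hn1 : (1 : ℝ) < n := by exact_mod_cast hn
  set t := logb 3 r
  have ht : t < 0 := logb_neg (by norm_num) hr0 hr1
  have h3t : 3 * t = 3 / log 3 * log r := by simp only [t, logb]; ring
  calc r ^ n = ((3 : ℝ) ^ (n : ℝ)) ^ t := by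
        rw [← rpow_mul (by norm_num), mul_comm, rpow_mul (by norm_num), rpow_logb (by norm_num)
          (by norm_num) hr0, rpow_natCast]
    _ ≤ ((n : ℝ) ^ (3 : ℝ)) ^ t := by
        refine rpow_le_rpow_of_nonpos (by positivity) ?_ ht.le
        exact_mod_cast cube_le_three_pow n
    _ = (n : ℝ) ^ (3 * t) := (rpow_mul (by positivity) _ _).symm
    _ < (n : ℝ) ^ σ := rpow_lt_rpow_of_exponent_lt hn1 (h3t ▸ hσ)

lemma summable_pow_mul_rpow {r : ℝ} (hr0 : 0 ≤ r) (hr1 : r < 1) (σ : ℝ) :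
    Summable fun n : ℕ ↦ r ^ n * (n : ℝ) ^ σ := by
  refine .of_norm_bounded_eventually_nat
    (summable_pow_mul_geometric_of_norm_lt_one ⌈σ⌉₊ (by rwa [norm_of_nonneg hr0])) ?_
  filter_upwards [Filter.eventually_ge_atTop 1] with n hn
  have hn1 : (1 : ℝ) ≤ n := by exact_mod_cast hn
  rw [norm_of_nonneg (by positivity), mul_comm, ← rpow_natCast _ ⌈σ⌉₊]
  gcongr
  exact Nat.le_ceil σ

lemma exists_prod_inv_one_sub_le {ι : Type*} {x : ι → ℝ} (hx0 : ∀ i, 0 ≤ x i)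
    (hx1 : ∀ i, x i < 1) (hx : Summable x) :
    ∃ C, ∀ s : Finset ι, ∏ i ∈ s, (1 - x i)⁻¹ ≤ C := by
  set y := fun i ↦ x i / (1 - x i)
  have hy0 : ∀ i, 0 ≤ y i := fun i ↦ div_nonneg (hx0 i) (by linarith [hx1 i])
  have hy : Summable y := by
    refine .of_norm_bounded_eventually (hx.mul_left 2) ?_
    filter_upwards [hx.tendsto_cofinite_zero.eventually_le_const (by norm_num : (0 : ℝ) < 1 / 2)]
      with i hi
    rw [norm_of_nonneg (hy0 i), div_le_iff₀ (by linarith)]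
    nlinarith [hx0 i]
  refine ⟨exp (∑' i, y i), fun s ↦ ?_⟩
  calc ∏ i ∈ s, (1 - x i)⁻¹ = ∏ i ∈ s, (1 + y i) := by
        refine prod_congr rfl fun i _ ↦ ?_
        have : 1 - x i ≠ 0 := by linarith [hx1 i]
        simp only [y]
        field_simp
        ring
    _ ≤ exp (∑ i ∈ s, y i) := prod_one_add_le_exp_sum s hy0
    _ ≤ exp (∑' i, y i) := exp_le_exp.mpr (hy.sum_le_tsum s fun i _ ↦ hy0 i)

section CompletelyMultiplicative

variable {F : Type*} [NormedDivisionRing F] {f : ℕ →*₀ F}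

lemma sum_range_norm_le_prod_primesBelow (hf : ∀ p, p.Prime → ‖f p‖ < 1) (N : ℕ) :
    ∑ n ∈ range N, ‖f n‖ ≤ ∏ p ∈ N.primesBelow, (1 - ‖f p‖)⁻¹ := by
  set g : ℕ →* ℝ := (normHom.comp f).toMonoidHom
  have hg : ∀ n, g n = ‖f n‖ := fun n ↦ rfl
  have hgp : ∀ {p : ℕ}, p.Prime → ‖g p‖ < 1 := fun hp ↦ by
    rw [hg, norm_norm]; exact hf _ hp
  have hprod : HasSum ((N.smoothNumbers).indicator (g ·)) (∏ p ∈ N.primesBelow, (1 - g p)⁻¹) :=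
    hasSum_subtype_iff_indicator.mp
      (EulerProduct.summable_and_hasSum_smoothNumbers_prod_primesBelow_geometric hgp N).2
  calc ∑ n ∈ range N, ‖f n‖ = ∑ n ∈ range N, (N.smoothNumbers).indicator (g ·) n := by
        refine sum_congr rfl fun n hn ↦ ?_
        rcases eq_or_ne n 0 with rfl | hn0
        · rw [Set.indicator_of_notMem (fun h ↦ Nat.ne_zero_of_mem_smoothNumbers h rfl), map_zero,
            norm_zero]
        · rw [Set.indicator_of_mem (Nat.mem_smoothNumbers_of_lt (Nat.pos_of_ne_zero hn0)
            (mem_range.mp hn)), hg]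
    _ ≤ ∏ p ∈ N.primesBelow, (1 - g p)⁻¹ :=
        sum_le_hasSum _ (fun n _ ↦ Set.indicator_nonneg (fun n _ ↦ norm_nonneg (f n)) n) hprod

lemma summable_norm_of_summable_norm_primes (hf : ∀ p, p.Prime → ‖f p‖ < 1)
    (hsum : Summable fun p : Nat.Primes ↦ ‖f p‖) : Summable (‖f ·‖) := by
  obtain ⟨C, hC⟩ := exists_prod_inv_one_sub_le (fun p : Nat.Primes ↦ norm_nonneg (f p))
    (fun p ↦ hf p p.prop) hsum
  refine summable_of_sum_range_le (c := C) (fun n ↦ norm_nonneg _) fun N ↦ ?_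
  calc ∑ n ∈ range N, ‖f n‖ ≤ ∏ p ∈ N.primesBelow, (1 - ‖f p‖)⁻¹ :=
        sum_range_norm_le_prod_primesBelow hf N
    _ = ∏ p ∈ N.primesBelow.subtype Nat.Prime, (1 - ‖f p‖)⁻¹ :=
        (prod_subtype_of_mem _ fun _ ↦ Nat.prime_of_mem_primesBelow).symm
    _ ≤ C := hC _

end CompletelyMultiplicative

lemma S_prime {p : ℕ} (hp : p.Prime) : S p = p := by
  simp [S, hp.factorization]

lemma S_mul {m n : ℕ} (hm : m ≠ 0) (hn : n ≠ 0) : S (m * n) = S m + S n := by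
  rw [S, Nat.factorization_mul hm hn]
  exact Finsupp.sum_add_index' (fun _ ↦ by simp) fun p k₁ k₂ ↦ add_mul k₁ k₂ p

noncomputable def twistedZetaTerm (α s : ℂ) : ℕ →*₀ ℂ where
  toFun n := if n = 0 then 0 else α ^ S n * (n : ℂ) ^ (-s)
  map_zero' := if_pos rfl
  map_one' := by simp [S]
  map_mul' m n := by
    rcases eq_or_ne m 0 with rfl | hm
    · simp
    rcases eq_or_ne n 0 with rfl | hn
    · simp
    simp only [mul_eq_zero, hm, hn, or_self, if_false]
    rw [S_mul hm hn, pow_add, Nat.cast_mul, ← Complex.ofReal_natCast m, ← Complex.ofReal_natCast n,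
      Complex.mul_cpow_ofReal_nonneg m.cast_nonneg n.cast_nonneg]
    ring

lemma twistedZetaTerm_apply (α s : ℂ) {n : ℕ} (hn : n ≠ 0) :
    twistedZetaTerm α s n = α ^ S n * (n : ℂ) ^ (-s) := if_neg hn

lemma twistedZetaTerm_prime (α s : ℂ) {p : ℕ} (hp : p.Prime) :
    twistedZetaTerm α s p = α ^ p * (p : ℂ) ^ (-s) := by
  rw [twistedZetaTerm_apply α s hp.ne_zero, S_prime hp]

lemma norm_twistedZetaTerm_prime (α s : ℂ) {p : ℕ} (hp : p.Prime) :
    ‖twistedZetaTerm α s p‖ = ‖α‖ ^ p * (p : ℝ) ^ (-s.re) := by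
  rw [twistedZetaTerm_prime α s hp, norm_mul, norm_pow, ← Complex.ofReal_natCast,
    Complex.norm_cpow_eq_rpow_re_of_pos (by exact_mod_cast hp.pos), Complex.neg_re]

lemma norm_twistedZetaTerm_prime_lt_one {α : ℂ} (hα : ‖α‖ < 1) {s : ℂ}
    (hs : 3 / log 3 * log ‖α‖ < s.re) {p : ℕ} (hp : p.Prime) :
    ‖twistedZetaTerm α s p‖ < 1 := by
  rw [norm_twistedZetaTerm_prime α s hp]
  rcases (norm_nonneg α).eq_or_lt with h0 | h0
  · simp [← h0, hp.ne_zero]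
  have hp0 : (0 : ℝ) < p := by exact_mod_cast hp.pos
  rw [rpow_neg hp0.le, ← div_eq_mul_inv, div_lt_one (by positivity)]
  exact pow_lt_rpow_of_mul_log_lt h0 hα hs hp.two_le

lemma summable_norm_twistedZetaTerm {α : ℂ} (hα : ‖α‖ < 1) {s : ℂ}
    (hs : 3 / log 3 * log ‖α‖ < s.re) : Summable (‖twistedZetaTerm α s ·‖) := by
  refine summable_norm_of_summable_norm_primes (fun _ ↦ norm_twistedZetaTerm_prime_lt_one hα hs) ?_
  exact ((summable_pow_mul_rpow (norm_nonneg α) hα _).comp_injective Subtype.val_injective).congr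
    fun p ↦ (norm_twistedZetaTerm_prime α s p.prop).symm

theorem twisted_zeta_euler_product (α : ℂ) (hα : ‖α‖ < 1) (s : ℂ)
    (hs : (3 / Real.log 3) * Real.log ‖α‖ < s.re) :
    Summable (fun p : {p : ℕ // p.Prime} => ‖α ^ (p : ℕ) * ((p : ℕ) : ℂ) ^ (-s)‖) ∧
    Multipliable (fun p : {p : ℕ // p.Prime} =>
      (1 - α ^ (p : ℕ) * ((p : ℕ) : ℂ) ^ (-s))⁻¹) ∧
    Summable (fun n : ℕ => ‖α ^ S (n + 1) * ((n + 1 : ℕ) : ℂ) ^ (-s)‖) ∧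
    (∏' p : {p : ℕ // p.Prime}, (1 - α ^ (p : ℕ) * ((p : ℕ) : ℂ) ^ (-s))⁻¹) =
      ∑' n : ℕ, α ^ S (n + 1) * ((n + 1 : ℕ) : ℂ) ^ (-s) := by
  set f := twistedZetaTerm α s
  have hsum : Summable (‖f ·‖) := summable_norm_twistedZetaTerm hα hs
  have hf_succ (n : ℕ) : f (n + 1) = α ^ S (n + 1) * ((n + 1 : ℕ) : ℂ) ^ (-s) :=
    twistedZetaTerm_apply α s n.succ_ne_zero
  have hprod : HasProd (fun p : {p : ℕ // p.Prime} ↦ (1 - α ^ (p : ℕ) * ((p : ℕ) : ℂ) ^ (-s))⁻¹)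
      (∑' n, f n) := by
    have h : HasProd (fun p : {p : ℕ // p.Prime} ↦ (1 - f p)⁻¹) (∑' n, f n) :=
      EulerProduct.eulerProduct_completely_multiplicative_hasProd hsum
    simpa only [f, twistedZetaTerm_prime α s (Subtype.prop _)] using h
  refine ⟨?_, hprod.multipliable, ?_, ?_⟩
  · exact (hsum.comp_injective Subtype.val_injective).congr
      fun p ↦ congrArg norm (twistedZetaTerm_prime α s p.prop)
  · simpa only [hf_succ] using (summable_nat_add_iff 1).mpr hsum
  · rw [hprod.tprod_eq, hsum.of_norm.tsum_eq_zero_add, map_zero, zero_add]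
    simp only [hf_succ]
end

section
/- Let p be an odd prime and c : ℕ → ℂ_p with |c(n)|_p bounded on integers coprime to p, and let α ∈ ℂ_p with |α|_p < 1. Then the twisted coefficients α^{S(n)} c(n) tend to 0 p-adically as n → ∞ (over n coprime to p), so the twisted p-adic Dirichlet series Σ_{p∤n} α^{S(n)} c(n)⟨n⟩^{-s} converges for all |s|_p < p^{(p-2)/(p-1)}. -/
open Filter Topology

lemma S_mul_s18 {a b : ℕ} (ha : a ≠ 0) (hb : b ≠ 0) : S (a * b) = S a + S b := by
  unfold S
  rw [Nat.factorization_mul ha hb, Finsupp.sum_add_index]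
  · intro q _
    simp
  · intro q _ k₁ k₂
    ring

lemma S_prime_s18 {q : ℕ} (hq : q.Prime) : S q = q := by
  unfold S
  rw [hq.factorization, Finsupp.sum_single_index] <;> simp

lemma le_two_pow_S {n : ℕ} (hn : n ≠ 0) : n ≤ 2 ^ S n := by
  induction n using Nat.recOnMul with
  | zero => exact absurd rfl hn
  | one => exact Nat.one_le_two_pow
  | prime q hq => rw [S_prime_s18 hq]; exact Nat.lt_two_pow_self.le
  | mul a b iha ihb =>
    obtain ⟨ha, hb⟩ := mul_ne_zero_iff.mp hn
    calc a * b ≤ 2 ^ S a * 2 ^ S b := Nat.mul_le_mul (iha ha) (ihb hb)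
      _ = 2 ^ S (a * b) := by rw [S_mul_s18 ha hb, pow_add]

lemma tendsto_S_atTop : Tendsto S atTop atTop :=
  tendsto_atTop_atTop.mpr fun b => ⟨2 ^ b, fun _ hn =>
    (Nat.pow_le_pow_iff_right one_lt_two).mp
      (hn.trans (le_two_pow_S ((Nat.two_pow_pos b).trans_le hn).ne'))⟩

theorem twisted_padic_dirichlet_series_converges_general
    {K : Type*} [NontriviallyNormedField K] [CompleteSpace K] [IsUltrametricDist K]
    (p : ℕ)
    (pow : ℕ → K → K)
    (hpow : ∀ (n : ℕ) (s : K), ¬ p ∣ n →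
      ‖s‖ < (p : ℝ) ^ (((p : ℝ) - 2) / ((p : ℝ) - 1)) → ‖pow n s‖ = 1)
    (c : ℕ → K) (C : ℝ) (hc : ∀ n : ℕ, ¬ p ∣ n → ‖c n‖ ≤ C)
    (α : K) (hα : ‖α‖ < 1) :
    Filter.Tendsto (fun n : ℕ => if p ∣ n then (0 : ℝ) else ‖α ^ S n * c n‖)
      Filter.atTop (nhds 0) ∧
    ∀ s : K, ‖s‖ < (p : ℝ) ^ (((p : ℝ) - 2) / ((p : ℝ) - 1)) →
      Summable (fun n : ℕ =>
        if p ∣ n then (0 : K) else α ^ S n * c n * pow n s) := by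
  set b : ℕ → K := fun n => if p ∣ n then 0 else c n
  have hb : IsBoundedUnder (· ≤ ·) atTop (norm ∘ b) :=
    isBoundedUnder_of ⟨max C 0, fun n => by
      by_cases h : p ∣ n <;> simp [b, h, hc n]⟩
  have hcoeff : Tendsto (fun n => α ^ S n * b n) atTop (𝓝 0) :=
    ((tendsto_pow_atTop_nhds_zero_of_norm_lt_one hα).comp tendsto_S_atTop).zero_mul_isBoundedUnder_le
      hb
  have hnorm : (fun n : ℕ => if p ∣ n then (0 : ℝ) else ‖α ^ S n * c n‖) =
      fun n => ‖α ^ S n * b n‖ := by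
    ext n
    by_cases h : p ∣ n <;> simp [b, h]
  refine ⟨hnorm ▸ tendsto_zero_iff_norm_tendsto_zero.mp hcoeff, fun s hs => ?_⟩
  refine NonarchimedeanAddGroup.summable_of_tendsto_cofinite_zero ?_
  rw [Nat.cofinite_eq_atTop]
  refine squeeze_zero_norm (fun n => le_of_eq ?_) (tendsto_zero_iff_norm_tendsto_zero.mp hcoeff)
  by_cases h : p ∣ n
  · simp [b, h]
  · simp [b, h, hpow n s h hs]

/-- Twisting by `ψ(n) = α^{S(n)}` with `|α|_p < 1` makes the `p`-adic Dirichlet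
series converge.  `K` is a complete nonarchimedean normed field (such as `ℂ_p`)
and `pow n s` represents `⟨n⟩^{-s}`, of norm `1` for `p ∤ n` on the disk
`‖s‖ < p^{(p-2)/(p-1)}`. -/
theorem twisted_padic_dirichlet_series_converges
    {K : Type*} [NontriviallyNormedField K] [CompleteSpace K] [IsUltrametricDist K]
    (p : ℕ) (hp : p.Prime) (hodd : Odd p)
    (pow : ℕ → K → K)
    (hpow : ∀ (n : ℕ) (s : K), ¬ p ∣ n →
      ‖s‖ < (p : ℝ) ^ (((p : ℝ) - 2) / ((p : ℝ) - 1)) → ‖pow n s‖ = 1)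
    (c : ℕ → K) (C : ℝ) (hc : ∀ n : ℕ, ¬ p ∣ n → ‖c n‖ ≤ C)
    (α : K) (hα : ‖α‖ < 1) :
    Filter.Tendsto (fun n : ℕ => if p ∣ n then (0 : ℝ) else ‖α ^ S n * c n‖)
      Filter.atTop (nhds 0) ∧
    ∀ s : K, ‖s‖ < (p : ℝ) ^ (((p : ℝ) - 2) / ((p : ℝ) - 1)) →
      Summable (fun n : ℕ =>
        if p ∣ n then (0 : K) else α ^ S n * c n * pow n s) :=
  twisted_padic_dirichlet_series_converges_general p pow hpow c C hc α hα
end
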